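/- Let ζ₁,…,ζₙ be i.i.d. real random variables, S_i the random walk, σ = max{i ≤ n : S_i ≤ 0}, and assume P(S_σ = 0) > 0. Then conditionally on {S_σ = 0}, for each k the pair (→F, ←F) = (last time of min on [0,σ], σ − first time of min on [0,σ]) has exchangeable components: (→F, ←F) and (←F, →F) have the same joint distribution. -/

import Mathlib

/-!
On `{σ = m, S_m = 0}` the first `m` increments form a bridge. Rotating them cyclically keeps the law
of the increments (they are exchangeable), leaves the walk after time `m` (hence `σ`) unchanged,
and, up to an additive constant, rotates the walk on `[0, m]`, so its set of minimizers is rotated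
too. Rotating by `l + f`, where `f ≤ l` are the first and last minimizers, sends `f` to `m - l` and
`l` to `m - f`, which exchanges `→F = l` and `←F = m - f`. (If `0` is a minimizer then so is `m`,
and `→F = ←F = m`.) Summing over `m` gives the claim.
-/

open MeasureTheory ProbabilityTheory Finset

lemma val_finRotate {m : ℕ} (i : Fin m) : (finRotate m i : ℕ) = (i + 1) % m := by
  obtain ⟨m, rfl⟩ : ∃ m', m = m' + 1 := Nat.exists_eq_succ_of_ne_zero (by have := i.2; omega)
  rw [coe_finRotate]
  split_ifs with h
  · simp [h]
  · rw [Nat.mod_eq_of_lt]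
    have := Fin.val_lt_last h
    omega

lemma val_finRotate_pow {m : ℕ} (k : ℕ) (i : Fin m) : ((finRotate m ^ k) i : ℕ) = (i + k) % m := by
  induction k with
  | zero => simp [Nat.mod_eq_of_lt i.2]
  | succ k ih => rw [pow_succ', Equiv.Perm.mul_apply, val_finRotate, ih, Nat.mod_add_mod, add_assoc]

lemma infinitePi_map_comp_perm {ι E : Type*} [MeasurableSpace E] (ν : Measure E)
    [IsProbabilityMeasure ν] (e : Equiv.Perm ι) :
    (Measure.infinitePi fun _ : ι => ν).map (fun x => x ∘ e) = Measure.infinitePi fun _ => ν := by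
  convert Measure.infinitePi_map_piCongrLeft (fun _ : ι => ν) e.symm using 2
  ext x i
  rw [MeasurableEquiv.coe_piCongrLeft, Equiv.piCongrLeft_apply_eq_cast]
  simp

lemma map_cond_preimage {Ω E : Type*} [MeasurableSpace Ω] [MeasurableSpace E] {μ : Measure Ω}
    {X : Ω → E} (hX : Measurable X) {B : Set E} (hB : MeasurableSet B) :
    (μ[|X ⁻¹' B]).map X = (μ.map X)[|B] := by
  ext t ht
  rw [Measure.map_apply hX ht, cond_apply' (hX ht), cond_apply' ht, Measure.map_apply hX hB,
    Measure.map_apply hX (hB.inter ht), Set.preimage_inter]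

section Measurability

variable {α : Type*} [MeasurableSpace α]

lemma measurable_sSup_nat {s : α → Set ℕ} (hs : ∀ i, MeasurableSet {x | i ∈ s x})
    (hne : ∀ x, (s x).Nonempty) (hbdd : ∀ x, BddAbove (s x)) :
    Measurable fun x => sSup (s x) := by
  refine measurable_of_Ioi fun a => ?_
  have : (fun x => sSup (s x)) ⁻¹' Set.Ioi a = ⋃ j > a, {x | j ∈ s x} := by
    ext x
    simp [lt_csSup_iff (hbdd x) (hne x), and_comm]
  rw [this]
  exact .iUnion fun j => .iUnion fun _ => hs j

lemma measurable_sInf_nat {s : α → Set ℕ} (hs : ∀ i, MeasurableSet {x | i ∈ s x})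
    (hne : ∀ x, (s x).Nonempty) : Measurable fun x => sInf (s x) := by
  refine measurable_of_Iio fun a => ?_
  have : (fun x => sInf (s x)) ⁻¹' Set.Iio a = ⋃ j < a, {x | j ∈ s x} := by
    ext x
    simp [csInf_lt_iff (OrderBot.bddBelow _) (hne x), and_comm]
  rw [this]
  exact .iUnion fun j => .iUnion fun _ => hs j

lemma measurable_apply_of_index {β : Type*} [MeasurableSpace β] {f : ℕ → α → β}
    (hf : ∀ m, Measurable (f m)) {g : α → ℕ} (hg : Measurable g) :
    Measurable fun x => f (g x) x :=
  (measurable_from_prod_countable_left (f := fun p : α × ℕ => f p.2 p.1) hf).comp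
    (measurable_id.prodMk hg)

end Measurability

namespace RandomWalk

def cyclicShift (m k : ℕ) : Equiv.Perm ℕ := (finRotate m ^ k).extendDomain Fin.equivSubtype

lemma cyclicShift_apply_of_lt {m j : ℕ} (k : ℕ) (h : j < m) :
    cyclicShift m k j = (j + k) % m := by
  rw [cyclicShift, Equiv.Perm.extendDomain_apply_subtype (p := (· < m)) _ _ h]
  exact val_finRotate_pow k _

lemma cyclicShift_apply_of_le {m j : ℕ} (k : ℕ) (h : m ≤ j) : cyclicShift m k j = j :=
  Equiv.Perm.extendDomain_apply_not_subtype _ _ (not_lt.2 h)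

lemma exists_lt_add_mod_eq {m r : ℕ} (k : ℕ) (hr : r < m) : ∃ j < m, (j + k) % m = r := by
  set j := (cyclicShift m k).symm r
  have hj : j < m := by
    by_contra! hj
    have := cyclicShift_apply_of_le k hj
    rw [Equiv.apply_symm_apply] at this
    omega
  exact ⟨j, hj, by rw [← cyclicShift_apply_of_lt k hj, Equiv.apply_symm_apply]⟩

def walk (x : ℕ → ℝ) (i : ℕ) : ℝ := ∑ j ∈ range i, x j

@[simp] lemma walk_zero (x : ℕ → ℝ) : walk x 0 = 0 := sum_range_zero x

lemma walk_succ (x : ℕ → ℝ) (i : ℕ) : walk x (i + 1) = walk x i + x i := sum_range_succ x i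

lemma walk_succ_mod {x : ℕ → ℝ} {m : ℕ} (hx : walk x m = 0) (hm : 0 < m) (r : ℕ) :
    walk x ((r + 1) % m) = walk x (r % m) + x (r % m) := by
  rw [← Nat.mod_add_mod, ← walk_succ]
  obtain hr | hr : r % m + 1 < m ∨ r % m + 1 = m := by have := Nat.mod_lt r hm; omega
  · rw [Nat.mod_eq_of_lt hr]
  · rw [hr, Nat.mod_self, walk_zero, hx]

lemma walk_comp_cyclicShift_of_le (x : ℕ → ℝ) (k : ℕ) {m i : ℕ} (hi : m ≤ i) :
    walk (x ∘ cyclicShift m k) i = walk x i :=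
  Equiv.Perm.sum_comp _ _ _ fun j hj => by
    by_contra hji
    exact hj (cyclicShift_apply_of_le k (by simp at hji; omega))

lemma walk_comp_cyclicShift_of_walk_eq_zero {x : ℕ → ℝ} {m : ℕ} (hx : walk x m = 0) (k : ℕ) :
    ∀ i ≤ m, walk (x ∘ cyclicShift m k) i = walk x ((i + k) % m) - walk x (k % m) := by
  intro i
  induction i with
  | zero => simp
  | succ i ih =>
    intro hi
    rw [walk_succ, ih (by omega), Function.comp_apply, cyclicShift_apply_of_lt k (by omega),
      add_right_comm, walk_succ_mod hx (by omega)]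
    ring

noncomputable def lastNonpos (n : ℕ) (w : ℕ → ℝ) : ℕ := sSup {i | i ≤ n ∧ w i ≤ 0}

def argmins (w : ℕ → ℝ) (m : ℕ) : Set ℕ := {i | i ≤ m ∧ w i = sInf (w '' Set.Iic m)}

lemma isGreatest_lastNonpos {w : ℕ → ℝ} (n : ℕ) (h0 : w 0 ≤ 0) :
    IsGreatest {i | i ≤ n ∧ w i ≤ 0} (lastNonpos n w) :=
  have hbdd : BddAbove {i | i ≤ n ∧ w i ≤ 0} := ⟨n, fun _ h => h.1⟩
  ⟨Nat.sSup_mem ⟨0, Nat.zero_le n, h0⟩ hbdd, fun _ h => le_csSup hbdd h⟩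

lemma lastNonpos_eq_of_eqOn_Ici {w w' : ℕ → ℝ} {n : ℕ} (h0 : w 0 ≤ 0)
    (h : ∀ i ≥ lastNonpos n w, w' i = w i) : lastNonpos n w' = lastNonpos n w := by
  obtain ⟨⟨hn, hw⟩, hmax⟩ := isGreatest_lastNonpos n h0
  refine IsGreatest.csSup_eq ⟨⟨hn, (h _ le_rfl).trans_le hw⟩, fun j ⟨hj, hj'⟩ => ?_⟩
  exact le_of_not_gt fun hlt => hlt.not_ge (hmax ⟨hj, h j hlt.le ▸ hj'⟩)

section argmins

variable {w : ℕ → ℝ} {m : ℕ}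

lemma mem_argmins_iff {i : ℕ} : i ∈ argmins w m ↔ i ≤ m ∧ ∀ j ≤ m, w i ≤ w j := by
  have hne : (w '' Set.Iic m).Nonempty := ⟨w 0, 0, Nat.zero_le m, rfl⟩
  have hbdd : BddBelow (w '' Set.Iic m) := ((Set.finite_Iic m).image w).bddBelow
  refine and_congr_right fun hi => ⟨fun he j hj => he ▸ csInf_le hbdd ⟨j, hj, rfl⟩, fun hmin => ?_⟩
  exact le_antisymm (le_csInf hne (by rintro _ ⟨j, hj, rfl⟩; exact hmin j hj))
    (csInf_le hbdd ⟨i, hi, rfl⟩)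

lemma argmins_nonempty : (argmins w m).Nonempty := by
  have hne : (w '' Set.Iic m).Nonempty := ⟨w 0, 0, Nat.zero_le m, rfl⟩
  obtain ⟨j, hj, hje⟩ := hne.csInf_mem ((Set.finite_Iic m).image w)
  exact ⟨j, hj, hje⟩

lemma bddAbove_argmins : BddAbove (argmins w m) := ⟨m, fun _ h => h.1⟩

lemma isLeast_sInf_argmins : IsLeast (argmins w m) (sInf (argmins w m)) :=
  ⟨Nat.sInf_mem argmins_nonempty, fun _ h => Nat.sInf_le h⟩

lemma isGreatest_sSup_argmins : IsGreatest (argmins w m) (sSup (argmins w m)) :=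
  ⟨Nat.sSup_mem argmins_nonempty bddAbove_argmins, fun _ h => le_csSup bddAbove_argmins h⟩

lemma zero_mem_argmins_iff (h : w m = w 0) : 0 ∈ argmins w m ↔ m ∈ argmins w m := by
  simp [mem_argmins_iff, h]

end argmins

lemma argmins_walk_comp_cyclicShift {x : ℕ → ℝ} {m : ℕ} (hx : walk x m = 0) (hm : 0 < m)
    (k : ℕ) :
    argmins (walk (x ∘ cyclicShift m k)) m = {i | i ≤ m ∧ (i + k) % m ∈ argmins (walk x) m} := by
  have hw' := walk_comp_cyclicShift_of_walk_eq_zero hx k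
  ext i
  simp only [Set.mem_ofPred_eq, mem_argmins_iff, (Nat.mod_lt _ hm).le, true_and]
  refine and_congr_right fun hi => ⟨fun hmin r hr => ?_, fun hmin j hj => ?_⟩
  · have hr' : walk x r = walk x (r % m) := by
      rcases hr.lt_or_eq with hr | rfl
      · rw [Nat.mod_eq_of_lt hr]
      · rw [Nat.mod_self, hx, walk_zero]
    obtain ⟨j, hj, hjr⟩ := exists_lt_add_mod_eq k (Nat.mod_lt r hm)
    have := hmin j hj.le
    rw [hw' i hi, hw' j hj.le, hjr] at this
    linarith
  · rw [hw' i hi, hw' j hj]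
    linarith [hmin _ (Nat.mod_lt (j + k) hm).le]

lemma isLeast_isGreatest_setOf_add_mod_mem {M : Set ℕ} {m f l : ℕ} (hf : IsLeast M f) (hl : IsGreatest M l)
    (hf0 : 0 < f) (hlm : l < m) :
    IsLeast {i | i ≤ m ∧ (i + (l + f)) % m ∈ M} (m - l) ∧
      IsGreatest {i | i ≤ m ∧ (i + (l + f)) % m ∈ M} (m - f) := by
  have hfl : f ≤ l := hl.2 hf.1
  have hbounds : ∀ i ≤ m, (i + (l + f)) % m ∈ M → m - l ≤ i ∧ i ≤ m - f := by
    intro i hi hmem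
    have := hf.2 hmem
    have := hl.2 hmem
    have hdiv := Nat.div_add_mod (i + (l + f)) m
    have hq : (i + (l + f)) / m < 3 := Nat.div_lt_of_lt_mul (by omega)
    interval_cases (i + (l + f)) / m <;> omega
  have hshift : ∀ c < m, (c + m) % m = c := fun c hc => by
    rw [Nat.add_mod_right, Nat.mod_eq_of_lt hc]
  refine ⟨⟨⟨by omega, ?_⟩, fun i hi => (hbounds i hi.1 hi.2).1⟩,
    ⟨⟨by omega, ?_⟩, fun i hi => (hbounds i hi.1 hi.2).2⟩⟩
  · rw [show m - l + (l + f) = f + m by omega, hshift f (by omega)]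
    exact hf.1
  · rw [show m - f + (l + f) = l + m by omega, hshift l hlm]
    exact hl.1

def bridge (n : ℕ) : Set (ℕ → ℝ) := {x | walk x (lastNonpos n (walk x)) = 0}

/-- `(→F, ←F)` for the walk with increments `x`, where `σ = lastNonpos n (walk x)`. -/
noncomputable def minTimes (n : ℕ) (x : ℕ → ℝ) : ℕ × ℕ :=
  (sSup (argmins (walk x) (lastNonpos n (walk x))),
    lastNonpos n (walk x) - sInf (argmins (walk x) (lastNonpos n (walk x))))

lemma comp_cyclicShift_mem_bridge {n m a b : ℕ} {x : ℕ → ℝ} (hab : a ≠ b)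
    (hx : x ∈ bridge n) (hmin : minTimes n x = (a, b)) (hσ : lastNonpos n (walk x) = m) :
    x ∘ cyclicShift m (a + (m - b)) ∈ bridge n ∧
      minTimes n (x ∘ cyclicShift m (a + (m - b))) = (b, a) ∧
      lastNonpos n (walk (x ∘ cyclicShift m (a + (m - b)))) = m := by
  simp only [bridge, minTimes, Set.mem_ofPred_eq, Prod.mk.injEq, hσ] at hx hmin ⊢
  obtain ⟨ha, hb⟩ := hmin
  set M := argmins (walk x) m
  have hf : IsLeast M (sInf M) := isLeast_sInf_argmins
  have hl : IsGreatest M (sSup M) := isGreatest_sSup_argmins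
  have hends : 0 ∈ M ↔ m ∈ M := zero_mem_argmins_iff (by rw [hx, walk_zero])
  have hf0 : 0 < sInf M := by
    refine Nat.pos_of_ne_zero fun hf0 => hab ?_
    have := hl.2 (hends.1 (hf0 ▸ hf.1))
    have := hl.1.1
    omega
  have hlm : sSup M < m := by
    refine lt_of_le_of_ne hl.1.1 fun hlm => ?_
    have := hf.2 (hends.2 (hlm ▸ hl.1))
    omega
  have hk : a + (m - b) = sSup M + sInf M := by
    have := hf.1.1
    omega
  set x' := x ∘ cyclicShift m (a + (m - b))
  have hσ' : lastNonpos n (walk x') = m :=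
    hσ ▸ lastNonpos_eq_of_eqOn_Ici (by rw [walk_zero])
      fun i hi => walk_comp_cyclicShift_of_le x _ (hσ ▸ hi)
  obtain ⟨hleast, hgreatest⟩ := isLeast_isGreatest_setOf_add_mod_mem hf hl hf0 hlm
  rw [← hk, ← argmins_walk_comp_cyclicShift hx (by omega)] at hleast hgreatest
  rw [hσ', hgreatest.csSup_eq, hleast.csInf_eq]
  exact ⟨(walk_comp_cyclicShift_of_le x _ le_rfl).trans hx, ⟨by omega, by omega⟩, rfl⟩

@[fun_prop]
lemma measurable_walk (i : ℕ) : Measurable fun x : ℕ → ℝ => walk x i := by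
  unfold walk
  fun_prop

lemma measurable_lastNonpos (n : ℕ) : Measurable fun x : ℕ → ℝ => lastNonpos n (walk x) :=
  measurable_sSup_nat (fun i => measurableSet_setOfPred.2 (by fun_prop))
    (fun _ => ⟨0, Nat.zero_le n, by rw [walk_zero]⟩) fun _ => ⟨n, fun _ h => h.1⟩

lemma measurableSet_mem_argmins (i m : ℕ) :
    MeasurableSet {x : ℕ → ℝ | i ∈ argmins (walk x) m} := by
  simp_rw [mem_argmins_iff]
  exact measurableSet_setOfPred.2 (by fun_prop)

lemma measurable_minTimes (n : ℕ) : Measurable (minTimes n) := by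
  have hσ := measurable_lastNonpos n
  have hsup (m : ℕ) : Measurable fun x : ℕ → ℝ => sSup (argmins (walk x) m) :=
    measurable_sSup_nat (measurableSet_mem_argmins · m) (fun _ => argmins_nonempty)
      fun _ => bddAbove_argmins
  have hinf (m : ℕ) : Measurable fun x : ℕ → ℝ => sInf (argmins (walk x) m) :=
    measurable_sInf_nat (measurableSet_mem_argmins · m) fun _ => argmins_nonempty
  exact (measurable_apply_of_index hsup hσ).prodMk (hσ.sub (measurable_apply_of_index hinf hσ))

lemma measurableSet_bridge (n : ℕ) : MeasurableSet (bridge n) :=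
  measurable_apply_of_index measurable_walk (measurable_lastNonpos n) (measurableSet_singleton 0)

section Exchangeable

variable {P : Measure (ℕ → ℝ)} (hP : ∀ e : Equiv.Perm ℕ, P.map (fun x => x ∘ e) = P)
include hP

lemma measure_bridge_inter_minTimes_le (n m a b : ℕ) :
    P (bridge n ∩ minTimes n ⁻¹' {(a, b)} ∩ (fun x => lastNonpos n (walk x)) ⁻¹' {m}) ≤
      P (bridge n ∩ minTimes n ⁻¹' {(b, a)} ∩ (fun x => lastNonpos n (walk x)) ⁻¹' {m}) := by
  rcases eq_or_ne a b with rfl | hab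
  · exact le_rfl
  set e := cyclicShift m (a + (m - b))
  calc _ ≤ P ((fun x => x ∘ e) ⁻¹'
          (bridge n ∩ minTimes n ⁻¹' {(b, a)} ∩ (fun x => lastNonpos n (walk x)) ⁻¹' {m})) :=
        measure_mono fun x hx => by
          obtain ⟨⟨hx, hmin⟩, hσ⟩ := hx
          obtain ⟨hx', hmin', hσ'⟩ := comp_cyclicShift_mem_bridge hab hx hmin hσ
          exact ⟨⟨hx', hmin'⟩, hσ'⟩
    _ ≤ P.map (fun x => x ∘ e) _ := Measure.le_map_apply
        (measurable_pi_lambda _ fun i => measurable_pi_apply (e i)).aemeasurable _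
    _ = _ := by rw [hP]

lemma measure_bridge_inter_minTimes_swap (n a b : ℕ) :
    P (bridge n ∩ minTimes n ⁻¹' {(a, b)}) = P (bridge n ∩ minTimes n ⁻¹' {(b, a)}) := by
  have hσ := measurable_lastNonpos n
  have hsplit : ∀ p, P (bridge n ∩ minTimes n ⁻¹' {p}) =
      ∑' m, P (bridge n ∩ minTimes n ⁻¹' {p} ∩ (fun x => lastNonpos n (walk x)) ⁻¹' {m}) := by
    intro p
    rw [← measure_iUnion, ← Set.inter_iUnion, ← Set.preimage_iUnion, Set.iUnion_of_singleton,
      Set.preimage_univ, Set.inter_univ]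
    · exact fun i j hij => (pairwise_disjoint_fiber _ hij).mono Set.inter_subset_right
        Set.inter_subset_right
    · exact fun m => ((measurableSet_bridge n).inter (measurable_minTimes n
        (measurableSet_singleton p))).inter (hσ (measurableSet_singleton m))
  rw [hsplit, hsplit]
  exact tsum_congr fun m => le_antisymm (measure_bridge_inter_minTimes_le hP n m a b)
    (measure_bridge_inter_minTimes_le hP n m b a)

theorem map_cond_bridge_minTimes_swap (n : ℕ) :
    (P[|bridge n]).map (minTimes n) = (P[|bridge n]).map (Prod.swap ∘ minTimes n) := by
  have hG := measurable_minTimes n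
  refine Measure.ext_of_singleton fun ⟨a, b⟩ => ?_
  have hswap : Prod.swap ⁻¹' {(a, b)} = {(b, a)} := Set.ext fun _ => Prod.swap_eq_iff_eq_swap
  rw [Measure.map_apply hG (measurableSet_singleton _),
    Measure.map_apply (measurable_swap.comp hG) (measurableSet_singleton _),
    cond_apply' (hG (measurableSet_singleton _)),
    cond_apply' ((measurable_swap.comp hG) (measurableSet_singleton _)),
    Set.preimage_comp, hswap, measure_bridge_inter_minTimes_swap hP]

end Exchangeable

end RandomWalk

open RandomWalk in
theorem stmt_19_general {Ω : Type*} [MeasurableSpace Ω] (μ : Measure Ω) [IsProbabilityMeasure μ]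
    (n : ℕ) (ζ : ℕ → Ω → ℝ)
    (hmeas : ∀ i, Measurable (ζ i))
    (hindep : ProbabilityTheory.iIndepFun ζ μ)
    (hident : ∀ i, μ.map (ζ i) = μ.map (ζ 0))
    (S : ℕ → Ω → ℝ) (hS : ∀ i ω, S i ω = ∑ j ∈ Finset.range i, ζ j ω)
    (σ : Ω → ℕ) (hσ : ∀ ω, σ ω = sSup {i | i ≤ n ∧ S i ω ≤ 0})
    (F F' : Ω → ℕ)
    (hF : ∀ ω, F ω = sSup {i | i ≤ σ ω ∧ S i ω = sInf ((fun j => S j ω) '' Set.Iic (σ ω))})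
    (hF' : ∀ ω, F' ω =
      σ ω - sInf {i | i ≤ σ ω ∧ S i ω = sInf ((fun j => S j ω) '' Set.Iic (σ ω))}) :
    (μ[|{ω | S (σ ω) ω = 0}]).map (fun ω => (F ω, F' ω))
      = (μ[|{ω | S (σ ω) ω = 0}]).map (fun ω => (F' ω, F ω)) := by
  let X : Ω → ℕ → ℝ := fun ω i => ζ i ω
  obtain rfl : S = fun i ω => walk (X ω) i := funext₂ hS
  obtain rfl : σ = fun ω => lastNonpos n (walk (X ω)) := funext hσ
  obtain rfl : F = fun ω => (minTimes n (X ω)).1 := funext hF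
  obtain rfl : F' = fun ω => (minTimes n (X ω)).2 := funext hF'
  have hX : Measurable X := measurable_pi_lambda _ hmeas
  have : IsProbabilityMeasure (μ.map (ζ 0)) :=
    Measure.isProbabilityMeasure_map (hmeas 0).aemeasurable
  have hexch (e : Equiv.Perm ℕ) : (μ.map X).map (fun x => x ∘ e) = μ.map X := by
    rw [hindep.map_fun_eq_infinitePi_map hmeas, funext hident]
    exact infinitePi_map_comp_perm _ e
  have hcond := map_cond_preimage (μ := μ) hX (measurableSet_bridge n)
  calc (μ[|X ⁻¹' bridge n]).map (minTimes n ∘ X)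
      = ((μ.map X)[|bridge n]).map (minTimes n) := by
        rw [← Measure.map_map (measurable_minTimes n) hX, hcond]
    _ = ((μ.map X)[|bridge n]).map (Prod.swap ∘ minTimes n) :=
        map_cond_bridge_minTimes_swap hexch n
    _ = (μ[|X ⁻¹' bridge n]).map ((Prod.swap ∘ minTimes n) ∘ X) := by
        rw [← hcond, Measure.map_map (measurable_swap.comp (measurable_minTimes n)) hX]

/-- Conditionally on {S_σ = 0}, the pair (→F, ←F) has exchangeable components:
(→F, ←F) and (←F, →F) have the same joint distribution. -/
theorem stmt_19 {Ω : Type*} [MeasurableSpace Ω] (μ : Measure Ω) [IsProbabilityMeasure μ]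
    (n : ℕ) (ζ : ℕ → Ω → ℝ)
    (hmeas : ∀ i, Measurable (ζ i))
    (hindep : ProbabilityTheory.iIndepFun ζ μ)
    (hident : ∀ i, μ.map (ζ i) = μ.map (ζ 0))
    (S : ℕ → Ω → ℝ) (hS : ∀ i ω, S i ω = ∑ j ∈ Finset.range i, ζ j ω)
    (σ : Ω → ℕ) (hσ : ∀ ω, σ ω = sSup {i | i ≤ n ∧ S i ω ≤ 0})
    (hpos : 0 < μ {ω | S (σ ω) ω = 0})
    (F F' : Ω → ℕ)
    (hF : ∀ ω, F ω = sSup {i | i ≤ σ ω ∧ S i ω = sInf ((fun j => S j ω) '' Set.Iic (σ ω))})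
    (hF' : ∀ ω, F' ω =
      σ ω - sInf {i | i ≤ σ ω ∧ S i ω = sInf ((fun j => S j ω) '' Set.Iic (σ ω))}) :
    (μ[|{ω | S (σ ω) ω = 0}]).map (fun ω => (F ω, F' ω))
      = (μ[|{ω | S (σ ω) ω = 0}]).map (fun ω => (F' ω, F ω)) :=
  stmt_19_general μ n ζ hmeas hindep hident S hS σ hσ F F' hF hF'
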